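/- Let $M$ be a real-valued Markov process such that for all $s \le t$ and every bounded 1-Lipschitz function $f$ there exists a 1-Lipschitz function $g$ with $\mathbb{E}[f(M_t) \mid \mathcal{F}_s] = g(M_s)$ almost surely. Then for all $s \le t$ and $x \le y$ in a set of full measure under the law of $M_s$, the transition kernel satisfies $\mathcal{W}_1(\pi^{s,t}_x, \pi^{s,t}_y) \le y - x$. -/

import Mathlib

/-!
For probability measures on `ℝ` the quantile coupling gives `W1 α β ≤ ∫ |F_α - F_β|`, where
`F` is the cdf. On the other hand, if `φ` has `|φ| ≤ 1` and bounded support, its primitive `f` is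
bounded and 1-Lipschitz and, by Fubini, `∫ f dα - ∫ f dβ = ∫ φ (F_β - F_α)`; taking for `φ` the
sign of `F_β - F_α` on `[-n, n]` shows that `∫ |F_α - F_β|` is controlled by the differences
`∫ f dα - ∫ f dβ` over bounded 1-Lipschitz `f`. By dominated convergence it suffices to test
countably many such `f`, dense for locally uniform convergence. For each of them the hypothesis
gives a 1-Lipschitz `g` with `∫ f dπ_x = g x` for almost every `x`; on the intersection `S` of
these countably many full-measure sets, `∫ f dπ_x - ∫ f dπ_y = g x - g y ≤ y - x` for every test
function `f`.
-/

open MeasureTheory ProbabilityTheory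

/-- The Wasserstein-1 distance between two measures on `ℝ`, as the infimum of transport costs
over all couplings. -/
noncomputable def W1 (α β : Measure ℝ) : ENNReal :=
  sInf { c | ∃ γ : Measure (ℝ × ℝ),
    γ.map Prod.fst = α ∧ γ.map Prod.snd = β ∧ c = ∫⁻ p, edist p.1 p.2 ∂γ }

open Set Filter TopologicalSpace

-- Only meaningful for `u ∈ (0, 1)`: otherwise the set is all of `ℝ` or may be empty, and `sInf`
-- returns a junk value.
noncomputable def quantile (α : Measure ℝ) (u : ℝ) : ℝ := sInf {x | u ≤ cdf α x}

section Quantile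

variable (α : Measure ℝ)

theorem quantile_le_iff {u : ℝ} (hu : u ∈ Ioo (0 : ℝ) 1) (t : ℝ) :
    quantile α u ≤ t ↔ u ≤ cdf α t := by
  have hne : {x | u ≤ cdf α x}.Nonempty :=
    (((tendsto_cdf_atTop α).eventually_const_lt hu.2).mono fun _ h => h.le).exists
  have hbdd : BddBelow {x | u ≤ cdf α x} := by
    obtain ⟨x₀, hx₀⟩ := ((tendsto_cdf_atBot α).eventually_lt_const hu.1).exists
    exact ⟨x₀, fun x hx => le_of_not_gt fun hlt => (hx.trans (monotone_cdf α hlt.le)).not_gt hx₀⟩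
  refine ⟨fun h => ?_, fun h => csInf_le hbdd h⟩
  have hright : ∀ x > quantile α u, u ≤ cdf α x := fun x hx => by
    obtain ⟨y, hy, hyx⟩ := exists_lt_of_csInf_lt hne hx
    exact hy.trans (monotone_cdf α hyx.le)
  have hattained : u ≤ cdf α (quantile α u) :=
    ge_of_tendsto (((cdf α).right_continuous _).mono Ioi_subset_Ici_self)
      (eventually_nhdsWithin_of_forall hright)
  exact hattained.trans (monotone_cdf α h)

theorem monotoneOn_quantile : MonotoneOn (quantile α) (Ioo 0 1) := fun _ hu _ hv huv =>
  (quantile_le_iff α hu _).2 (huv.trans ((quantile_le_iff α hv _).1 le_rfl))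

theorem aemeasurable_quantile : AEMeasurable (quantile α) (volume.restrict (Ioo 0 1)) :=
  aemeasurable_restrict_of_monotoneOn measurableSet_Ioo (monotoneOn_quantile α)

theorem volume_restrict_Ioo_Ioc {a b : ℝ} (ha : 0 ≤ a) (hb : b ≤ 1) :
    volume.restrict (Ioo (0 : ℝ) 1) (Ioc a b) = ENNReal.ofReal (b - a) := by
  rw [Measure.restrict_congr_set Ioo_ae_eq_Ioc, Measure.restrict_apply measurableSet_Ioc,
    inter_eq_left.2 (Ioc_subset_Ioc ha hb), Real.volume_Ioc]

theorem map_quantile [IsProbabilityMeasure α] :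
    (volume.restrict (Ioo (0 : ℝ) 1)).map (quantile α) = α := by
  have : IsProbabilityMeasure (volume.restrict (Ioo (0 : ℝ) 1)) := ⟨by simp⟩
  have := Measure.isProbabilityMeasure_map (aemeasurable_quantile α)
  refine Measure.ext_of_Iic _ _ fun t => ?_
  rw [Measure.map_apply_of_aemeasurable (aemeasurable_quantile α) measurableSet_Iic,
    ← ofReal_cdf, ← sub_zero (cdf α t), ← volume_restrict_Ioo_Ioc le_rfl (cdf_le_one α t)]
  refine measure_congr (eventuallyEq_set.2 ?_)
  filter_upwards [ae_restrict_mem measurableSet_Ioo] with u hu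
  simp only [mem_preimage, mem_Iic, mem_Ioc, quantile_le_iff α hu, hu.1, true_and]

end Quantile

theorem mem_Ico_min_max_iff {α β : Type*} [LinearOrder α] [LinearOrder β] {p q t : α} {u a b : β}
    (hp : p ≤ t ↔ u ≤ a) (hq : q ≤ t ↔ u ≤ b) :
    t ∈ Ico (min p q) (max p q) ↔ u ∈ Ioc (min a b) (max a b) := by
  simp only [mem_Ico, mem_Ioc, ← not_le, min_le_iff, le_max_iff, max_le_iff, le_min_iff, hp, hq]
  tauto

theorem lintegral_edist_eq_lintegral_measure_mem_Ico {Ω : Type*} [MeasurableSpace Ω]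
    {μ : Measure Ω} [SFinite μ] {X Y : Ω → ℝ} (hX : AEMeasurable X μ) (hY : AEMeasurable Y μ) :
    ∫⁻ ω, edist (X ω) (Y ω) ∂μ =
      ∫⁻ t, μ {ω | t ∈ Ico (min (X ω) (Y ω)) (max (X ω) (Y ω))} := by
  set B : Set (ℝ × ℝ × ℝ) := {p | p.2.2 ∈ Ico (min p.1 p.2.1) (max p.1 p.2.1)}
  have hB : MeasurableSet B :=
    (measurableSet_le (f := fun p : ℝ × ℝ × ℝ => min p.1 p.2.1) (by fun_prop) (by fun_prop)).inter
      (measurableSet_lt (g := fun p : ℝ × ℝ × ℝ => max p.1 p.2.1) (by fun_prop) (by fun_prop))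
  have hXYt : AEMeasurable (fun p : Ω × ℝ => (X p.1, Y p.1, p.2)) (μ.prod volume) :=
    hX.comp_fst.prodMk (hY.comp_fst.prodMk measurable_snd.aemeasurable)
  calc ∫⁻ ω, edist (X ω) (Y ω) ∂μ = ∫⁻ ω, (∫⁻ t, B.indicator 1 (X ω, Y ω, t)) ∂μ := by
        refine lintegral_congr fun ω => ?_
        rw [edist_dist, Real.dist_eq, abs_sub_comm, ← max_sub_min_eq_abs, ← Real.volume_Ico]
        exact (lintegral_indicator_one measurableSet_Ico).symm
    _ = ∫⁻ t, ∫⁻ ω, B.indicator 1 (X ω, Y ω, t) ∂μ :=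
        lintegral_lintegral_swap ((measurable_one.indicator hB).comp_aemeasurable hXYt)
    _ = _ := lintegral_congr fun t => lintegral_indicator_one₀
        ((hX.prodMk (hY.prodMk aemeasurable_const)).nullMeasurableSet_preimage hB)

theorem W1_le_lintegral_abs_cdf_sub (α β : Measure ℝ) [IsProbabilityMeasure α]
    [IsProbabilityMeasure β] :
    W1 α β ≤ ∫⁻ t, ENNReal.ofReal |cdf α t - cdf β t| := by
  set ν := volume.restrict (Ioo (0 : ℝ) 1)
  have hQ : AEMeasurable (fun u => (quantile α u, quantile β u)) ν :=
    (aemeasurable_quantile α).prodMk (aemeasurable_quantile β)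
  have hcoupling : W1 α β ≤ ∫⁻ p, edist p.1 p.2 ∂ν.map fun u => (quantile α u, quantile β u) :=
    sInf_le ⟨_, (AEMeasurable.map_map_of_aemeasurable measurable_fst.aemeasurable hQ).trans
      (map_quantile α), (AEMeasurable.map_map_of_aemeasurable measurable_snd.aemeasurable hQ).trans
      (map_quantile β), rfl⟩
  rw [lintegral_map' measurable_edist.aemeasurable hQ,
    lintegral_edist_eq_lintegral_measure_mem_Ico (aemeasurable_quantile α)
      (aemeasurable_quantile β)] at hcoupling
  refine hcoupling.trans_eq (lintegral_congr fun t => ?_)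
  have hcdf : ν {u | t ∈ Ico (min (quantile α u) (quantile β u))
        (max (quantile α u) (quantile β u))} =
      ν (Ioc (min (cdf α t) (cdf β t)) (max (cdf α t) (cdf β t))) := by
    refine measure_congr (eventuallyEq_set.2 ?_)
    filter_upwards [ae_restrict_mem measurableSet_Ioo] with u hu
    exact mem_Ico_min_max_iff (quantile_le_iff α hu t) (quantile_le_iff β hu t)
  rw [hcdf, volume_restrict_Ioo_Ioc (le_min (cdf_nonneg α t) (cdf_nonneg β t))
    (max_le (cdf_le_one α t) (cdf_le_one β t)), max_sub_min_eq_abs, abs_sub_comm]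

theorem measureReal_Ioi_eq_one_sub_cdf (α : Measure ℝ) [IsProbabilityMeasure α] (s : ℝ) :
    α.real (Ioi s) = 1 - cdf α s := by
  rw [← compl_Iic, probReal_compl_eq_one_sub measurableSet_Iic, cdf_eq_real]

noncomputable def primitive (φ : ℝ → ℝ) (z : ℝ) : ℝ := ∫ s in Iio z, φ s

section Primitive

variable {φ : ℝ → ℝ}

theorem primitive_sub_primitive (hφ : Integrable φ) (w z : ℝ) :
    primitive φ z - primitive φ w = ∫ s in w..z, φ s := by
  simp only [primitive, ← integral_Iic_eq_integral_Iio]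
  exact intervalIntegral.integral_Iic_sub_Iic hφ.integrableOn hφ.integrableOn

theorem lipschitzWith_one_primitive (hφ : Integrable φ) (h1 : ∀ s, |φ s| ≤ 1) :
    LipschitzWith 1 (primitive φ) :=
  LipschitzWith.of_dist_le_mul fun z w => by
    rw [NNReal.coe_one, one_mul, Real.dist_eq, Real.dist_eq,
      primitive_sub_primitive hφ, ← Real.norm_eq_abs]
    simpa using intervalIntegral.norm_integral_le_of_norm_le_const (a := w) (b := z)
      fun s _ => (Real.norm_eq_abs _).trans_le (h1 s)

theorem abs_primitive_le (hφ : Integrable φ) (z : ℝ) : |primitive φ z| ≤ ∫ s, |φ s| :=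
  abs_integral_le_integral_abs.trans
    (setIntegral_le_integral hφ.abs (ae_of_all _ fun _ => abs_nonneg _))

theorem isBounded_range_primitive (hφ : Integrable φ) :
    Bornology.IsBounded (range (primitive φ)) :=
  isBounded_iff_forall_norm_le.2 ⟨_, forall_mem_range.2 (abs_primitive_le hφ)⟩

theorem integral_primitive (hφ : Integrable φ) (α : Measure ℝ) [IsFiniteMeasure α] :
    ∫ z, primitive φ z ∂α = ∫ s, α.real (Ioi s) * φ s := by
  have hF : Integrable (Function.uncurry fun z s => (Iio z).indicator φ s) (α.prod volume) :=
    (hφ.comp_snd α).indicator (measurableSet_lt measurable_snd measurable_fst)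
  calc ∫ z, primitive φ z ∂α = ∫ z, (∫ s, (Iio z).indicator φ s) ∂α := by
        simp only [primitive, integral_indicator measurableSet_Iio]
    _ = ∫ s, ∫ z, (Ioi s).indicator (fun _ => φ s) z ∂α := integral_integral_swap hF
    _ = ∫ s, α.real (Ioi s) * φ s := by
        simp only [integral_indicator_const _ measurableSet_Ioi, smul_eq_mul]

theorem integral_primitive_sub_integral_primitive (hφ : Integrable φ) (α β : Measure ℝ)
    [IsProbabilityMeasure α] [IsProbabilityMeasure β] :
    ∫ z, primitive φ z ∂α - ∫ z, primitive φ z ∂β = ∫ s, φ s * (cdf β s - cdf α s) := by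
  have hint (γ : Measure ℝ) [IsProbabilityMeasure γ] : Integrable fun s => (1 - cdf γ s) * φ s :=
    hφ.bdd_mul (c := 1) (measurable_const.sub (monotone_cdf γ).measurable).aestronglyMeasurable
      (ae_of_all _ fun s => abs_le.2 ⟨by linarith [cdf_le_one γ s], by linarith [cdf_nonneg γ s]⟩)
  simp only [integral_primitive hφ, measureReal_Ioi_eq_one_sub_cdf,
    ← integral_sub (hint α) (hint β)]
  refine integral_congr_ae (ae_of_all _ fun s => ?_)
  ring

end Primitive

section CdfDistance

variable (α β : Measure ℝ) [IsProbabilityMeasure α] [IsProbabilityMeasure β] {c : ℝ}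

theorem setIntegral_abs_cdf_sub_le {K : Set ℝ} (hK : MeasurableSet K) (hKfin : volume K ≠ ⊤)
    (h : ∀ f : ℝ → ℝ, LipschitzWith 1 f → Bornology.IsBounded (range f) →
      ∫ z, f z ∂α - ∫ z, f z ∂β ≤ c) :
    ∫ t in K, |cdf α t - cdf β t| ≤ c := by
  set φ : ℝ → ℝ := K.indicator fun s => if cdf α s ≤ cdf β s then 1 else -1
  have hφ1 : ∀ s, |φ s| ≤ 1 := fun s => by
    simp only [φ, indicator]
    split_ifs <;> simp
  have hφ : Integrable φ :=
    (integrable_indicator_iff hK).2 (Measure.integrableOn_of_bounded (M := 1) hKfin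
      (Measurable.ite (measurableSet_le (monotone_cdf α).measurable (monotone_cdf β).measurable)
        measurable_const measurable_const).aestronglyMeasurable
      (ae_of_all _ fun s => by split_ifs <;> simp))
  calc ∫ t in K, |cdf α t - cdf β t| = ∫ s, φ s * (cdf β s - cdf α s) := by
        rw [← integral_indicator hK]
        refine integral_congr_ae (ae_of_all _ fun s => ?_)
        by_cases hs : s ∈ K
        · simp only [φ, indicator_of_mem hs]
          split_ifs with hle
          · rw [abs_sub_comm, abs_of_nonneg (sub_nonneg.2 hle), one_mul]
          · rw [abs_of_pos (sub_pos.2 (not_le.1 hle))]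
            ring
        · simp [φ, hs]
    _ = ∫ z, primitive φ z ∂α - ∫ z, primitive φ z ∂β :=
        (integral_primitive_sub_integral_primitive hφ α β).symm
    _ ≤ c := h _ (lipschitzWith_one_primitive hφ hφ1) (isBounded_range_primitive hφ)

theorem lintegral_abs_cdf_sub_le
    (h : ∀ f : ℝ → ℝ, LipschitzWith 1 f → Bornology.IsBounded (range f) →
      ∫ z, f z ∂α - ∫ z, f z ∂β ≤ c) :
    ∫⁻ t, ENNReal.ofReal |cdf α t - cdf β t| ≤ ENNReal.ofReal c := by
  have hdir : Directed (· ⊆ ·) fun n : ℕ => Metric.closedBall (0 : ℝ) n :=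
    Monotone.directed_le fun m n hmn => Metric.closedBall_subset_closedBall (Nat.cast_le.2 hmn)
  rw [← setLIntegral_univ, ← Metric.iUnion_closedBall_nat 0,
    setLIntegral_iUnion_of_directed _ hdir]
  refine iSup_le fun n => ?_
  have hint : IntegrableOn (fun t => |cdf α t - cdf β t|) (Metric.closedBall 0 n) :=
    Measure.integrableOn_of_bounded (M := 1) measure_closedBall_lt_top.ne
      ((monotone_cdf α).measurable.sub (monotone_cdf β).measurable).abs.aestronglyMeasurable
      (ae_of_all _ fun s => by
        simpa using abs_sub_le_of_nonneg_of_le (cdf_nonneg α s) (cdf_le_one α s)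
          (cdf_nonneg β s) (cdf_le_one β s))
  rw [← ofReal_integral_eq_lintegral_ofReal hint (ae_of_all _ fun _ => abs_nonneg _)]
  exact ENNReal.ofReal_le_ofReal
    (setIntegral_abs_cdf_sub_le α β measurableSet_closedBall measure_closedBall_lt_top.ne h)

end CdfDistance

section Density

variable {X : Type*} [TopologicalSpace X] [MeasurableSpace X] [OpensMeasurableSpace X]
  [SecondCountableTopology X] [LocallyCompactSpace X]

theorem continuousOn_integral_of_abs_le (α : Measure X) [IsFiniteMeasure α] (B : ℝ) :
    ContinuousOn (fun f : C(X, ℝ) => ∫ z, f z ∂α) {f | ∀ z, |f z| ≤ B} := fun f _ =>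
  tendsto_integral_filter_of_dominated_convergence (fun _ => B)
    (Eventually.of_forall fun g : C(X, ℝ) => g.continuous.aestronglyMeasurable)
    (eventually_nhdsWithin_of_forall fun _ hg =>
      ae_of_all _ fun z => (Real.norm_eq_abs _).trans_le (hg z))
    (integrable_const B)
    (ae_of_all _ fun z =>
      ((continuous_eval_const z).tendsto f).mono_left nhdsWithin_le_nhds)

theorem integral_sub_integral_le_of_mem_closure (α β : Measure X) [IsFiniteMeasure α]
    [IsFiniteMeasure β] {D : Set C(X, ℝ)} {B c : ℝ} (hD : ∀ f ∈ D, ∀ z, |f z| ≤ B)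
    (h : ∀ f ∈ D, ∫ z, f z ∂α - ∫ z, f z ∂β ≤ c) {f : C(X, ℝ)} (hf : f ∈ closure D) :
    ∫ z, f z ∂α - ∫ z, f z ∂β ≤ c := by
  have hB : IsClosed {f : C(X, ℝ) | ∀ z, |f z| ≤ B} := by
    simp only [ofPred_forall]
    exact isClosed_iInter fun z =>
      isClosed_le (continuous_abs.comp (continuous_eval_const z)) continuous_const
  have hclosed := ((continuousOn_integral_of_abs_le α B).sub
    (continuousOn_integral_of_abs_le β B)).preimage_isClosed_of_isClosed hB (isClosed_Iic (a := c))
  exact (hclosed.closure_subset_iff.2 (fun g hg => ⟨hD g hg, h g hg⟩) hf).2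

end Density

def boundedLipschitz (n : ℕ) : Set C(ℝ, ℝ) := {f | LipschitzWith 1 f ∧ ∀ z, |f z| ≤ n}

theorem exists_countable_W1_test_family :
    ∃ F : Set C(ℝ, ℝ), F.Countable ∧
      (∀ f ∈ F, LipschitzWith 1 f ∧ Bornology.IsBounded (range f)) ∧
      ∀ (α β : Measure ℝ) [IsProbabilityMeasure α] [IsProbabilityMeasure β] (c : ℝ),
        (∀ f ∈ F, ∫ z, f z ∂α - ∫ z, f z ∂β ≤ c) → W1 α β ≤ ENNReal.ofReal c := by
  choose D hDL hDc hLD using fun n : ℕ =>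
    (IsSeparable.of_separableSpace (boundedLipschitz n)).exists_countable_dense_subset
  refine ⟨⋃ n, D n, countable_iUnion hDc, fun f hf => ?_, fun α β _ _ c h => ?_⟩
  · obtain ⟨n, hfn⟩ := mem_iUnion.1 hf
    obtain ⟨hL, hB⟩ := hDL n hfn
    exact ⟨hL, isBounded_iff_forall_norm_le.2 ⟨n, forall_mem_range.2 hB⟩⟩
  refine (W1_le_lintegral_abs_cdf_sub α β).trans (lintegral_abs_cdf_sub_le α β fun f hL hB => ?_)
  obtain ⟨C, hC⟩ := isBounded_iff_forall_norm_le.1 hB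
  obtain ⟨n, hn⟩ := exists_nat_ge C
  exact integral_sub_integral_le_of_mem_closure α β (fun g hg => (hDL n hg).2)
    (fun g hg => h g (mem_iUnion_of_mem n hg)) (f := ⟨f, hL.continuous⟩)
    (hLD n ⟨hL, fun z => (hC _ (mem_range_self z)).trans hn⟩)

theorem lipschitz_markov_kernel_general {Ω : Type*} {mΩ : MeasurableSpace Ω} {μ : Measure Ω}
    (ℱ : Filtration ℝ mΩ) (M : ℝ → Ω → ℝ)
    (hadp : Adapted ℱ M)
    (π : ℝ → ℝ → Kernel ℝ ℝ) (hπ : ∀ s t, IsMarkovKernel (π s t))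
    (htrans : ∀ s t : ℝ, s ≤ t → ∀ f : ℝ → ℝ, Measurable f →
      Bornology.IsBounded (Set.range f) →
      μ[(fun ω => f (M t ω)) | ℱ s] =ᵐ[μ] fun ω => ∫ y, f y ∂(π s t (M s ω)))
    (hLipMarkov : ∀ s t : ℝ, s ≤ t → ∀ f : ℝ → ℝ, LipschitzWith 1 f →
      Bornology.IsBounded (Set.range f) →
      ∃ g : ℝ → ℝ, LipschitzWith 1 g ∧
        μ[(fun ω => f (M t ω)) | ℱ s] =ᵐ[μ] fun ω => g (M s ω)) :
    ∀ s t : ℝ, s ≤ t → ∃ S : Set ℝ, μ.map (M s) Sᶜ = 0 ∧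
      ∀ x ∈ S, ∀ y ∈ S, x ≤ y →
        W1 (π s t x) (π s t y) ≤ ENNReal.ofReal (y - x) := by
  intro s t hst
  obtain ⟨F, hFc, hFL, hW1⟩ := exists_countable_W1_test_family
  have : Countable F := hFc.to_subtype
  have hMs : Measurable (M s) := (hadp s).mono (ℱ.le s) le_rfl
  have hkernel : ∀ f : F, ∃ g : ℝ → ℝ, LipschitzWith 1 g ∧
      ∀ᵐ x ∂μ.map (M s), ∫ z, f.1 z ∂π s t x = g x := fun ⟨f, hf⟩ => by
    obtain ⟨g, hg, hfg⟩ := hLipMarkov s t hst f (hFL f hf).1 (hFL f hf).2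
    have hmeas : Measurable fun x => ∫ z, f z ∂π s t x :=
      f.continuous.stronglyMeasurable.integral_kernel.measurable
    refine ⟨g, hg, (ae_map_iff hMs.aemeasurable
      (measurableSet_eq_fun hmeas hg.continuous.measurable)).2 ?_⟩
    filter_upwards [htrans s t hst f f.continuous.measurable (hFL f hf).2, hfg] with ω h₁ h₂
    exact h₁.symm.trans h₂
  choose g hgL hg using hkernel
  refine ⟨{x | ∀ f : F, ∫ z, f.1 z ∂π s t x = g f x}, ae_iff.1 (ae_all_iff.2 hg),
    fun x hx y hy hxy => hW1 _ _ _ fun f hf => ?_⟩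
  have := hπ s t
  calc ∫ z, f z ∂π s t x - ∫ z, f z ∂π s t y = g ⟨f, hf⟩ x - g ⟨f, hf⟩ y := by
        rw [hx ⟨f, hf⟩, hy ⟨f, hf⟩]
    _ ≤ dist (g ⟨f, hf⟩ x) (g ⟨f, hf⟩ y) := le_abs_self _
    _ ≤ dist x y := by simpa using (hgL ⟨f, hf⟩).dist_le_mul x y
    _ = y - x := by rw [Real.dist_eq, abs_sub_comm, abs_of_nonneg (sub_nonneg.2 hxy)]

/-- If a Markov process `M` with transition kernels `π s t` maps bounded 1-Lipschitz functions to
1-Lipschitz functions under conditional expectation, then its transition kernels are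
1-Lipschitz in Wasserstein-1 distance, on a set of full measure under the law of `M s`. -/
theorem lipschitz_markov_kernel {Ω : Type*} {mΩ : MeasurableSpace Ω} {μ : Measure Ω}
    [IsProbabilityMeasure μ] (ℱ : Filtration ℝ mΩ) (M : ℝ → Ω → ℝ)
    (hadp : Adapted ℱ M)
    (π : ℝ → ℝ → Kernel ℝ ℝ) (hπ : ∀ s t, IsMarkovKernel (π s t))
    (htrans : ∀ s t : ℝ, s ≤ t → ∀ f : ℝ → ℝ, Measurable f →
      Bornology.IsBounded (Set.range f) →
      μ[(fun ω => f (M t ω)) | ℱ s] =ᵐ[μ] fun ω => ∫ y, f y ∂(π s t (M s ω)))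
    (hLipMarkov : ∀ s t : ℝ, s ≤ t → ∀ f : ℝ → ℝ, LipschitzWith 1 f →
      Bornology.IsBounded (Set.range f) →
      ∃ g : ℝ → ℝ, LipschitzWith 1 g ∧
        μ[(fun ω => f (M t ω)) | ℱ s] =ᵐ[μ] fun ω => g (M s ω)) :
    ∀ s t : ℝ, s ≤ t → ∃ S : Set ℝ, μ.map (M s) Sᶜ = 0 ∧
      ∀ x ∈ S, ∀ y ∈ S, x ≤ y →
        W1 (π s t x) (π s t y) ≤ ENNReal.ofReal (y - x) :=
  lipschitz_markov_kernel_general ℱ M hadp π hπ htrans hLipMarkov
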